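/- (Proposition 4) Let ⟨Δ_g, Δ_d, J, I⟩ be an acceptable state. Then the definition Δ_g ∪ Δ_d has a well-founded model that expands the set of literals that are true in I and defined in Δ_d. -/
import Mathlib


namespace LazyMX

/-- The four truth values: true, false, unknown, inconsistent. -/
inductive TV : Type where
  | t | f | u | i
deriving DecidableEq

namespace TV

/-- The truth order `f <_t u <_t t`, `f <_t i <_t t`. -/
def truthLe (a b : TV) : Prop := a = b ∨ a = f ∨ b = t

/-- The precision order `u <_p t <_p i`, `u <_p f <_p i`. -/
def precLe (a b : TV) : Prop := a = b ∨ a = u ∨ b = i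

/-- The inverse of a truth value. -/
def inv : TV → TV
  | t => f
  | f => t
  | u => u
  | i => i

open Classical in
/-- Greatest lower bound of a set of truth values w.r.t. the truth order. -/
noncomputable def sInf (S : Set TV) : TV :=
  if f ∈ S ∨ (u ∈ S ∧ i ∈ S) then f
  else if u ∈ S then u
  else if i ∈ S then i
  else t

open Classical in
/-- Least upper bound of a set of truth values w.r.t. the truth order. -/
noncomputable def sSup (S : Set TV) : TV :=
  if t ∈ S ∨ (u ∈ S ∧ i ∈ S) then t
  else if u ∈ S then u
  else if i ∈ S then i
  else f

/-- Minimum (meet) of two truth values under the truth order. -/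
noncomputable def tmin (a b : TV) : TV := sInf {a, b}

/-- Maximum (join) of two truth values under the truth order. -/
noncomputable def tmax (a b : TV) : TV := sSup {a, b}

end TV

/-- A (function-free) vocabulary: a type of predicate symbols with arities. -/
structure Voc : Type 1 where
  Pred : Type
  arity : Pred → ℕ

/-- A domain atom `P(d₁,…,dₙ)`. -/
structure Atom (σ : Voc) (D : Type) : Type where
  pred : σ.Pred
  args : Fin (σ.arity pred) → D

/-- A domain literal: an atom or its negation. -/
inductive Lit (σ : Voc) (D : Type) : Type where
  | pos : Atom σ D → Lit σ D
  | neg : Atom σ D → Lit σ D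

namespace Lit
variable {σ : Voc} {D : Type}

def atom : Lit σ D → Atom σ D
  | pos a => a
  | neg a => a

def negate : Lit σ D → Lit σ D
  | pos a => neg a
  | neg a => pos a

def isNeg : Lit σ D → Prop
  | pos _ => False
  | neg _ => True

/-- The truth value a literal asks for: `t` for a positive, `f` for a negative literal. -/
def sign : Lit σ D → TV
  | pos _ => TV.t
  | neg _ => TV.f

end Lit

/-- A four-valued structure with domain `D`: an assignment of truth values to domain atoms. -/
def Struct (σ : Voc) (D : Type) : Type := Atom σ D → TV

variable {σ : Voc} {D : Type}

def TwoValued (I : Struct σ D) : Prop := ∀ a, I a = TV.t ∨ I a = TV.f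

def ThreeValued (I : Struct σ D) : Prop := ∀ a, I a ≠ TV.i

/-- `J` expands `I` (`I ≤_p J` pointwise). -/
def ExpandsS (I J : Struct σ D) : Prop := ∀ a, TV.precLe (I a) (J a)

/-- A set of domain literals is consistent if no atom occurs both positively and negatively. -/
def ConsistentSet (S : Set (Lit σ D)) : Prop := ∀ a, ¬ (Lit.pos a ∈ S ∧ Lit.neg a ∈ S)

open Classical in
/-- The four-valued structure corresponding to a set of domain literals. -/
noncomputable def toStruct (S : Set (Lit σ D)) : Struct σ D := fun a =>
  if Lit.pos a ∈ S then (if Lit.neg a ∈ S then TV.i else TV.t)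
  else (if Lit.neg a ∈ S then TV.f else TV.u)

/-- A literal is true in a structure. -/
def litTrue (I : Struct σ D) : Lit σ D → Prop
  | Lit.pos a => I a = TV.t
  | Lit.neg a => I a = TV.f

/-- A literal is false in a structure. -/
def litFalse (I : Struct σ D) : Lit σ D → Prop
  | Lit.pos a => I a = TV.f
  | Lit.neg a => I a = TV.t

/-- First-order formulas over domain atoms, with quantifiers ranging over explicitly
given subsets of the domain; quantified bodies are represented as `D`-indexed families
(`b d` is the instance `φ[x↦d]`). -/
inductive Formula (σ : Voc) (D : Type) : Type where
  | atom : Atom σ D → Formula σ D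
  | not : Formula σ D → Formula σ D
  | and : Formula σ D → Formula σ D → Formula σ D
  | or : Formula σ D → Formula σ D → Formula σ D
  | all : Set D → (D → Formula σ D) → Formula σ D
  | ex : Set D → (D → Formula σ D) → Formula σ D

/-- The standard four-valued truth assignment. -/
noncomputable def Formula.eval (I : Struct σ D) : Formula σ D → TV
  | Formula.atom a => I a
  | Formula.not φ => (φ.eval I).inv
  | Formula.and φ ψ => TV.tmin (φ.eval I) (ψ.eval I)
  | Formula.or φ ψ => TV.tmax (φ.eval I) (ψ.eval I)
  | Formula.all D' b => TV.sInf { v | ∃ d ∈ D', (b d).eval I = v }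
  | Formula.ex D' b => TV.sSup { v | ∃ d ∈ D', (b d).eval I = v }

/-- The predicate symbols occurring in a formula. -/
def Formula.preds : Formula σ D → Set σ.Pred
  | Formula.atom a => {a.pred}
  | Formula.not φ => φ.preds
  | Formula.and φ ψ => φ.preds ∪ ψ.preds
  | Formula.or φ ψ => φ.preds ∪ ψ.preds
  | Formula.all _ b => ⋃ d, (b d).preds
  | Formula.ex _ b => ⋃ d, (b d).preds

/-- A rule `∀ x̄ ∈ D̄ : P(x̄) ← φ`; `body d̄` is the instantiated body `φ[x̄↦d̄]`. -/
structure Rule (σ : Voc) (D : Type) : Type where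
  head : σ.Pred
  dom : Set (Fin (σ.arity head) → D)
  body : (Fin (σ.arity head) → D) → Formula σ D

/-- A definition: a set of rules. -/
abbrev Defn (σ : Voc) (D : Type) := Set (Rule σ D)

/-- The rule `r` defines the atom `a`. -/
def Rule.defines (r : Rule σ D) (a : Atom σ D) : Prop :=
  ∃ d ∈ r.dom, a = ⟨r.head, d⟩

def definedAtom (Δ : Defn σ D) (a : Atom σ D) : Prop := ∃ r ∈ Δ, r.defines a

def openAtom (Δ : Defn σ D) (a : Atom σ D) : Prop := ¬ definedAtom Δ a

def definedLit (Δ : Defn σ D) (l : Lit σ D) : Prop := definedAtom Δ l.atom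

def openLit (Δ : Defn σ D) (l : Lit σ D) : Prop := ¬ definedAtom Δ l.atom

/-- Each domain atom is defined by at most one rule. -/
def WellFormed (Δ : Defn σ D) : Prop :=
  ∀ a r₁ r₂, r₁ ∈ Δ → r₂ ∈ Δ → r₁.defines a → r₂.defines a → r₁ = r₂

/-- The value of the body of the rule instance defining `a`, evaluated in `I`. -/
noncomputable def bodyVal (Δ : Defn σ D) (I : Struct σ D) (a : Atom σ D) : TV :=
  TV.sSup { v | ∃ r ∈ Δ, ∃ d ∈ r.dom, a = ⟨r.head, d⟩ ∧ (r.body d).eval I = v }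

open Classical in
/-- Combine a lower set `x` and an upper set `y` of defined atoms with an interpretation
`Io` of the open atoms into a four-valued structure. -/
noncomputable def combine (Δ : Defn σ D) (Io : Struct σ D) (x y : Set (Atom σ D)) :
    Struct σ D := fun a =>
  if definedAtom Δ a then
    (if a ∈ x then (if a ∈ y then TV.t else TV.i) else (if a ∈ y then TV.u else TV.f))
  else Io a

/-- Lower component of the four-valued immediate consequence operator. -/
def lowerOp (Δ : Defn σ D) (Io : Struct σ D) (x y : Set (Atom σ D)) : Set (Atom σ D) :=
  { a | definedAtom Δ a ∧
      (bodyVal Δ (combine Δ Io x y) a = TV.t ∨ bodyVal Δ (combine Δ Io x y) a = TV.i) }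

/-- Upper component of the four-valued immediate consequence operator. -/
def upperOp (Δ : Defn σ D) (Io : Struct σ D) (x y : Set (Atom σ D)) : Set (Atom σ D) :=
  { a | definedAtom Δ a ∧
      (bodyVal Δ (combine Δ Io x y) a = TV.t ∨ bodyVal Δ (combine Δ Io x y) a = TV.u) }

/-- Stable revision, lower half: least fixpoint of the lower operator with `y` fixed. -/
def stableLower (Δ : Defn σ D) (Io : Struct σ D) (y : Set (Atom σ D)) : Set (Atom σ D) :=
  ⋂₀ { x | lowerOp Δ Io x y ⊆ x }

/-- Stable revision, upper half: least fixpoint of the upper operator with `x` fixed. -/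
def stableUpper (Δ : Defn σ D) (Io : Struct σ D) (x : Set (Atom σ D)) : Set (Atom σ D) :=
  ⋂₀ { y | upperOp Δ Io x y ⊆ y }

/-- Precision-prefixpoints of the stable revision operator. -/
def wfPrefixpoints (Δ : Defn σ D) (Io : Struct σ D) :
    Set (Set (Atom σ D) × Set (Atom σ D)) :=
  { p | stableLower Δ Io p.2 ⊆ p.1 ∧ p.2 ⊆ stableUpper Δ Io p.1 }

/-- Lower half of the well-founded fixpoint (the precision-least fixpoint of stable revision). -/
def wfLower (Δ : Defn σ D) (Io : Struct σ D) : Set (Atom σ D) :=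
  ⋂₀ (Prod.fst '' wfPrefixpoints Δ Io)

/-- Upper half of the well-founded fixpoint. -/
def wfUpper (Δ : Defn σ D) (Io : Struct σ D) : Set (Atom σ D) :=
  ⋃₀ (Prod.snd '' wfPrefixpoints Δ Io)

/-- The (parametrized) well-founded model `wf_Δ(Io|open(Δ))` of `Δ`; it agrees with `Io`
on the open atoms and is the well-founded fixpoint on the defined atoms. -/
noncomputable def wfModel (Δ : Defn σ D) (Io : Struct σ D) : Struct σ D :=
  combine Δ Io (wfLower Δ Io) (wfUpper Δ Io)

/-- A two-valued structure is a model of the definition `Δ` if it equals the well-founded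
model of `Δ` relative to its restriction to the open atoms. -/
def IsModelOfDef (I : Struct σ D) (Δ : Defn σ D) : Prop :=
  TwoValued I ∧ ∀ a, I a = wfModel Δ I a

/-- `Δ` is total: the well-founded model is two-valued for every two-valued
interpretation of the open atoms. -/
def IsTotalDef (Δ : Defn σ D) : Prop :=
  ∀ Io : Struct σ D, TwoValued Io → TwoValued (wfModel Δ Io)

/-- A model of the canonical theory `{P_t, Δ}`. -/
def IsModelOfTheory (I : Struct σ D) (pt : Atom σ D) (Δ : Defn σ D) : Prop :=
  IsModelOfDef I Δ ∧ I pt = TV.t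

/-- A direct justification for a defined literal `l`: a consistent nonempty set `S` of
domain literals making the body of the rule instance defining `l.atom` true
(for positive `l`) resp. false (for negative `l`). -/
def IsDirectJust (Δ : Defn σ D) (l : Lit σ D) (S : Set (Lit σ D)) : Prop :=
  ConsistentSet S ∧ S.Nonempty ∧
    ∃ r ∈ Δ, ∃ d ∈ r.dom, l.atom = ⟨r.head, d⟩ ∧ (r.body d).eval (toStruct S) = l.sign

/-- A justification over `Δ`: a graph assigning to each literal either no children or a
direct justification. -/
def IsJustification (Δ : Defn σ D) (J : Lit σ D → Set (Lit σ D)) : Prop :=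
  ∀ l, J l = ∅ ∨ IsDirectJust Δ l (J l)

/-- Reachability in the justification graph. -/
def Reach (J : Lit σ D → Set (Lit σ D)) : Lit σ D → Lit σ D → Prop :=
  Relation.ReflTransGen (fun x y => y ∈ J x)

/-- The nodes of the subgraph `J_L` reachable from the set `L` of literals. -/
def reachSet (J : Lit σ D → Set (Lit σ D)) (L : Set (Lit σ D)) : Set (Lit σ D) :=
  { x | ∃ l ∈ L, Reach J l x }

/-- `J` is total for `L`: `J` is defined in every defined literal reachable from `L`. -/
def TotalFor (Δ : Defn σ D) (J : Lit σ D → Set (Lit σ D)) (L : Set (Lit σ D)) : Prop :=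
  ∀ x ∈ reachSet J L, definedLit Δ x → J x ≠ ∅

/-- An infinite path in the subgraph `J_l`. -/
def IsInfPathFrom (J : Lit σ D → Set (Lit σ D)) (l : Lit σ D) (p : ℕ → Lit σ D) : Prop :=
  Reach J l (p 0) ∧ ∀ n, p (n + 1) ∈ J (p n)

/-- `l` is well-founded in `J`: every infinite path in `J_l` is negative. -/
def WellFoundedIn (J : Lit σ D → Set (Lit σ D)) (l : Lit σ D) : Prop :=
  ∀ p : ℕ → Lit σ D, IsInfPathFrom J l p → ∀ n, (p n).isNeg

/-- `J` justifies `L`: `J_L` is total for `L`, every literal of `L` is well-founded,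
and the set of literals in `J_L` is consistent. -/
def Justifies (Δ : Defn σ D) (J : Lit σ D → Set (Lit σ D)) (L : Set (Lit σ D)) : Prop :=
  TotalFor Δ J L ∧ (∀ l ∈ L, WellFoundedIn J l) ∧ ConsistentSet (reachSet J L)

/-- The part of `J` on the nodes `N` is consistent with the literal-set structure `I`:
`I` is consistent and no literal of `N` in which `J` is defined is false in `I`. -/
def ConsistentWithOn (J : Lit σ D → Set (Lit σ D)) (N I : Set (Lit σ D)) : Prop :=
  ConsistentSet I ∧ ∀ l ∈ N, J l ≠ ∅ → l.negate ∉ I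

/-- The predicate symbols occurring in a definition. -/
def vocDef (Δ : Defn σ D) : Set σ.Pred :=
  { P | ∃ r ∈ Δ, r.head = P } ∪ { P | ∃ r ∈ Δ, ∃ d ∈ r.dom, P ∈ (r.body d).preds }

open Classical in
/-- Restriction of a structure to the symbols in `s` (everything else becomes unknown). -/
noncomputable def restrictP (s : Set σ.Pred) (I : Struct σ D) : Struct σ D :=
  fun a => if a.pred ∈ s then I a else TV.u

open Classical in
/-- Restriction of a structure to a set of atoms (everything else becomes unknown). -/
noncomputable def restrictA (A : Set (Atom σ D)) (I : Struct σ D) : Struct σ D :=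
  fun a => if a ∈ A then I a else TV.u

/-- Strong `s`-equivalence of two classes of models: each model of one, restricted to `s`,
expands in a unique way to a model of the other. -/
def StronglyEquivModels (s : Set σ.Pred) (M M' : Set (Struct σ D)) : Prop :=
  (∀ I ∈ M, ∃! I', I' ∈ M' ∧ ExpandsS (restrictP s I) I') ∧
  (∀ I' ∈ M', ∃! I, I ∈ M ∧ ExpandsS (restrictP s I') I)

/-- Strong `s`-equivalence of two definitions. -/
def StronglyEquivDef (s : Set σ.Pred) (Δ₁ Δ₂ : Defn σ D) : Prop :=
  StronglyEquivModels s { I | IsModelOfDef I Δ₁ } { I | IsModelOfDef I Δ₂ }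

/-- A (two-valued) structure expands a literal-set structure. -/
def expandsLit (Iin : Set (Lit σ D)) (M : Struct σ D) : Prop := ∀ l ∈ Iin, litTrue M l

/-- Strong `s`-equivalence of two definitions in the input structure `Iin`. -/
def StronglyEquivDefIn (s : Set σ.Pred) (Iin : Set (Lit σ D)) (Δ₁ Δ₂ : Defn σ D) : Prop :=
  StronglyEquivModels s { I | IsModelOfDef I Δ₁ ∧ expandsLit Iin I }
    { I | IsModelOfDef I Δ₂ ∧ expandsLit Iin I }

/-- The domain atom of a 0-ary predicate symbol. -/
def ptAtom (σ : Voc) (D : Type) (Pt : σ.Pred) (h : σ.arity Pt = 0) : Atom σ D :=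
  ⟨Pt, fun j => Fin.elim0 (h ▸ j)⟩

/-- An acceptable state `⟨Δg, Δd, J, I⟩` for the canonical theory `{P_t, Δ}` with input
structure `Iin`. -/
structure AcceptableState (Δ : Defn σ D) (Iin : Set (Lit σ D))
    (Δg Δd : Defn σ D) (J : Lit σ D → Set (Lit σ D)) (I : Set (Lit σ D)) : Prop where
  wf_gd : WellFormed (Δg ∪ Δd)
  wf_g : WellFormed Δg
  wf_d : WellFormed Δd
  total_gd : IsTotalDef (Δg ∪ Δd)
  total_g : IsTotalDef Δg
  total_d : IsTotalDef Δd
  equiv : StronglyEquivDef (vocDef Δ) (Δg ∪ Δd) Δ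
  disj : ∀ a, ¬ (definedAtom Δg a ∧ definedAtom Δd a)
  just : IsJustification (Δg ∪ Δd) J
  expands : Iin ⊆ I
  justified : Justifies (Δg ∪ Δd) J { l | l ∈ I ∧ definedLit Δd l }
  consistentWith : ConsistentWithOn J (reachSet J { l | l ∈ I ∧ definedLit Δd l }) I

/-- A default acceptable state. -/
structure DefaultAcceptableState (Δ : Defn σ D) (Iin : Set (Lit σ D))
    (Δg Δd : Defn σ D) (J : Lit σ D → Set (Lit σ D)) (I : Set (Lit σ D))
    extends AcceptableState Δ Iin Δg Δd J I : Prop where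
  dj_open_or_defd : ∀ l l', l' ∈ J l → openLit (Δg ∪ Δd) l' ∨ definedLit Δd l'
  justifies_defined : Justifies (Δg ∪ Δd) J { l | J l ≠ ∅ }

/-- A model of a theory (list of sentences plus a definition) relative to a vocabulary `s`:
two-valued on `s`, unknown outside `s`, satisfying all sentences and the definition. -/
def IsModelOfTOn (s : Set σ.Pred) (M : Struct σ D) (φs : List (Formula σ D))
    (Δ : Defn σ D) : Prop :=
  (∀ a : Atom σ D, a.pred ∈ s → M a = TV.t ∨ M a = TV.f) ∧
  (∀ a : Atom σ D, a.pred ∉ s → M a = TV.u) ∧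
  (∀ φ ∈ φs, φ.eval M = TV.t) ∧
  (∀ a : Atom σ D, a.pred ∈ s → M a = wfModel Δ M a)

/-- A model of a canonical theory `{pt, Δ}` relative to a vocabulary `s`. -/
def IsModelOfCanonOn (s : Set σ.Pred) (M : Struct σ D) (pt : Atom σ D)
    (Δ : Defn σ D) : Prop :=
  (∀ a : Atom σ D, a.pred ∈ s → M a = TV.t ∨ M a = TV.f) ∧
  (∀ a : Atom σ D, a.pred ∉ s → M a = TV.u) ∧
  M pt = TV.t ∧
  (∀ a : Atom σ D, a.pred ∈ s → M a = wfModel Δ M a)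

/-- A model of a definition relative to a vocabulary `s`: two-valued on `s`,
unknown outside `s`, and satisfying the well-founded-model equation on `s`. -/
def IsModelOfDefOn (s : Set σ.Pred) (I : Struct σ D) (Δ : Defn σ D) : Prop :=
  (∀ a : Atom σ D, a.pred ∈ s → I a = TV.t ∨ I a = TV.f) ∧
  (∀ a : Atom σ D, a.pred ∉ s → I a = TV.u) ∧
  (∀ a : Atom σ D, a.pred ∈ s → I a = wfModel Δ I a)

/-! ### Auxiliary machinery for Proposition 4 -/

namespace TV

/-- `v` is "at least true": `t` or `i`. -/
def Lo (v : TV) : Prop := v = t ∨ v = i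

/-- `v` is "at least false": `f` or `i`. -/
def Fa (v : TV) : Prop := v = f ∨ v = i

instance : DecidablePred Lo := fun v => by unfold Lo; infer_instance
instance : DecidablePred Fa := fun v => by unfold Fa; infer_instance

lemma tu_iff {v : TV} : (v = t ∨ v = u) ↔ ¬ Fa v := by cases v <;> decide

lemma lo_inv {v : TV} : Lo v.inv ↔ Fa v := by cases v <;> decide

lemma fa_inv {v : TV} : Fa v.inv ↔ Lo v := by cases v <;> decide

lemma lo_sInf {S : Set TV} : Lo (sInf S) ↔ ∀ v ∈ S, Lo v := by
  unfold sInf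
  split_ifs with h1 h2 h3
  · refine iff_of_false (by decide) fun hall => ?_
    rcases h1 with hf | ⟨hu, _⟩
    · exact absurd (hall _ hf) (by decide)
    · exact absurd (hall _ hu) (by decide)
  · exact iff_of_false (by decide) fun hall => absurd (hall _ h2) (by decide)
  · refine iff_of_true (by decide) fun v hv => ?_
    cases v with
    | t => decide
    | f => exact absurd (Or.inl hv) h1
    | u => exact absurd hv h2
    | i => decide
  · refine iff_of_true (by decide) fun v hv => ?_
    cases v with
    | t => decide
    | f => exact absurd (Or.inl hv) h1
    | u => exact absurd hv h2
    | i => exact absurd hv h3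

lemma fa_sInf {S : Set TV} : Fa (sInf S) ↔ ∃ v ∈ S, Fa v := by
  unfold sInf
  split_ifs with h1 h2 h3
  · refine iff_of_true (by decide) ?_
    rcases h1 with hf | ⟨_, hi⟩
    · exact ⟨_, hf, by decide⟩
    · exact ⟨_, hi, by decide⟩
  · refine iff_of_false (by decide) ?_
    rintro ⟨v, hv, hfa⟩
    cases v with
    | t => exact absurd hfa (by decide)
    | f => exact h1 (Or.inl hv)
    | u => exact absurd hfa (by decide)
    | i => exact h1 (Or.inr ⟨h2, hv⟩)
  · exact iff_of_true (by decide) ⟨_, h3, by decide⟩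
  · refine iff_of_false (by decide) ?_
    rintro ⟨v, hv, hfa⟩
    cases v with
    | t => exact absurd hfa (by decide)
    | f => exact h1 (Or.inl hv)
    | u => exact absurd hfa (by decide)
    | i => exact h3 hv

lemma lo_sSup {S : Set TV} : Lo (sSup S) ↔ ∃ v ∈ S, Lo v := by
  unfold sSup
  split_ifs with h1 h2 h3
  · refine iff_of_true (by decide) ?_
    rcases h1 with ht | ⟨_, hi⟩
    · exact ⟨_, ht, by decide⟩
    · exact ⟨_, hi, by decide⟩
  · refine iff_of_false (by decide) ?_
    rintro ⟨v, hv, hlo⟩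
    cases v with
    | t => exact h1 (Or.inl hv)
    | f => exact absurd hlo (by decide)
    | u => exact absurd hlo (by decide)
    | i => exact h1 (Or.inr ⟨h2, hv⟩)
  · exact iff_of_true (by decide) ⟨_, h3, by decide⟩
  · refine iff_of_false (by decide) ?_
    rintro ⟨v, hv, hlo⟩
    cases v with
    | t => exact h1 (Or.inl hv)
    | f => exact absurd hlo (by decide)
    | u => exact absurd hlo (by decide)
    | i => exact h3 hv

lemma fa_sSup {S : Set TV} : Fa (sSup S) ↔ ∀ v ∈ S, Fa v := by
  unfold sSup
  split_ifs with h1 h2 h3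
  · refine iff_of_false (by decide) fun hall => ?_
    rcases h1 with ht | ⟨hu, _⟩
    · exact absurd (hall _ ht) (by decide)
    · exact absurd (hall _ hu) (by decide)
  · exact iff_of_false (by decide) fun hall => absurd (hall _ h2) (by decide)
  · refine iff_of_true (by decide) fun v hv => ?_
    cases v with
    | t => exact absurd (Or.inl hv) h1
    | f => decide
    | u => exact absurd hv h2
    | i => decide
  · refine iff_of_true (by decide) fun v hv => ?_
    cases v with
    | t => exact absurd (Or.inl hv) h1
    | f => decide
    | u => exact absurd hv h2
    | i => exact absurd hv h3

lemma lo_tmin {a b : TV} : Lo (tmin a b) ↔ Lo a ∧ Lo b := by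
  unfold tmin; rw [lo_sInf]; simp

lemma fa_tmin {a b : TV} : Fa (tmin a b) ↔ Fa a ∨ Fa b := by
  unfold tmin; rw [fa_sInf]; simp

lemma lo_tmax {a b : TV} : Lo (tmax a b) ↔ Lo a ∨ Lo b := by
  unfold tmax; rw [lo_sSup]; simp

lemma fa_tmax {a b : TV} : Fa (tmax a b) ↔ Fa a ∧ Fa b := by
  unfold tmax; rw [fa_sSup]; simp

end TV

section Aux

variable {σ : Voc} {D : Type}

/-- Signed two-valued evaluation; `pol = true` is the "truth" evaluation, `pol = false`
the "falsity" evaluation. -/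
def ev (P N : Atom σ D → Prop) : Bool → Formula σ D → Prop
  | pol, .atom a => if pol then P a else N a
  | pol, .not φ => ev P N (!pol) φ
  | pol, .and φ ψ => if pol then ev P N pol φ ∧ ev P N pol ψ else ev P N pol φ ∨ ev P N pol ψ
  | pol, .or φ ψ => if pol then ev P N pol φ ∨ ev P N pol ψ else ev P N pol φ ∧ ev P N pol ψ
  | pol, .all D' b => if pol then ∀ d ∈ D', ev P N pol (b d) else ∃ d ∈ D', ev P N pol (b d)
  | pol, .ex D' b => if pol then ∃ d ∈ D', ev P N pol (b d) else ∀ d ∈ D', ev P N pol (b d)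

lemma ev_mono {P N P' N' : Atom σ D → Prop} (hP : ∀ a, P a → P' a) (hN : ∀ a, N a → N' a) :
    ∀ (φ : Formula σ D) (pol : Bool), ev P N pol φ → ev P' N' pol φ := by
  intro φ
  induction φ with
  | atom a => intro pol; cases pol <;> simp only [ev, if_true, if_false, Bool.false_eq_true,
      if_pos, if_neg] <;> first | exact hN a | exact hP a
  | not φ ih => intro pol; exact ih (!pol)
  | and φ ψ ihφ ihψ =>
      intro pol; cases pol
      · rintro (h | h)
        · exact Or.inl (ihφ _ h)
        · exact Or.inr (ihψ _ h)
      · rintro ⟨h1, h2⟩; exact ⟨ihφ _ h1, ihψ _ h2⟩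
  | or φ ψ ihφ ihψ =>
      intro pol; cases pol
      · rintro ⟨h1, h2⟩; exact ⟨ihφ _ h1, ihψ _ h2⟩
      · rintro (h | h)
        · exact Or.inl (ihφ _ h)
        · exact Or.inr (ihψ _ h)
  | all D' b ih =>
      intro pol; cases pol
      · rintro ⟨d, hd, h⟩; exact ⟨d, hd, ih d _ h⟩
      · intro h d hd; exact ih d _ (h d hd)
  | ex D' b ih =>
      intro pol; cases pol
      · intro h d hd; exact ih d _ (h d hd)
      · rintro ⟨d, hd, h⟩; exact ⟨d, hd, ih d _ h⟩

private lemma exists_val_iff {α : Type*} (D' : Set α) (g : α → TV) (Q : TV → Prop) :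
    (∃ v ∈ {v | ∃ d ∈ D', g d = v}, Q v) ↔ ∃ d ∈ D', Q (g d) := by
  constructor
  · rintro ⟨v, ⟨d, hd, rfl⟩, hq⟩; exact ⟨d, hd, hq⟩
  · rintro ⟨d, hd, hq⟩; exact ⟨g d, ⟨d, hd, rfl⟩, hq⟩

private lemma forall_val_iff {α : Type*} (D' : Set α) (g : α → TV) (Q : TV → Prop) :
    (∀ v ∈ {v | ∃ d ∈ D', g d = v}, Q v) ↔ ∀ d ∈ D', Q (g d) := by
  constructor
  · intro h d hd; exact h _ ⟨d, hd, rfl⟩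
  · rintro h v ⟨d, hd, rfl⟩; exact h d hd

lemma ev_eval (I : Struct σ D) (φ : Formula σ D) :
    ∀ pol : Bool, (ev (fun a => TV.Lo (I a)) (fun a => TV.Fa (I a)) pol φ ↔
      if pol then TV.Lo (φ.eval I) else TV.Fa (φ.eval I)) := by
  induction φ with
  | atom a => intro pol; cases pol <;> simp [ev, Formula.eval]
  | not φ ih =>
      intro pol; cases pol
      · simpa [ev, Formula.eval, TV.fa_inv] using ih true
      · simpa [ev, Formula.eval, TV.lo_inv] using ih false
  | and φ ψ ihφ ihψ =>
      intro pol; cases pol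
      · simp only [ev, Formula.eval, if_neg (by decide : ¬((false : Bool) = true)),
          TV.fa_tmin]
        rw [ihφ false, ihψ false]; simp
      · simp only [ev, Formula.eval, if_pos rfl, TV.lo_tmin]
        rw [ihφ true, ihψ true]; simp
  | or φ ψ ihφ ihψ =>
      intro pol; cases pol
      · simp only [ev, Formula.eval, if_neg (by decide : ¬((false : Bool) = true)),
          TV.fa_tmax]
        rw [ihφ false, ihψ false]; simp
      · simp only [ev, Formula.eval, if_pos rfl, TV.lo_tmax]
        rw [ihφ true, ihψ true]; simp
  | all D' b ih =>
      intro pol; cases pol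
      · simp only [ev, Formula.eval, if_neg (by decide : ¬((false : Bool) = true))]
        rw [TV.fa_sInf, exists_val_iff]
        constructor
        · rintro ⟨d, hd, h⟩; exact ⟨d, hd, by simpa using (ih d false).1 h⟩
        · rintro ⟨d, hd, h⟩; exact ⟨d, hd, (ih d false).2 (by simpa using h)⟩
      · simp only [ev, Formula.eval, if_pos rfl]
        rw [TV.lo_sInf, forall_val_iff]
        constructor
        · intro h d hd; simpa using (ih d true).1 (h d hd)
        · intro h d hd; exact (ih d true).2 (by simpa using h d hd)
  | ex D' b ih =>
      intro pol; cases pol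
      · simp only [ev, Formula.eval, if_neg (by decide : ¬((false : Bool) = true))]
        rw [TV.fa_sSup, forall_val_iff]
        constructor
        · intro h d hd; simpa using (ih d false).1 (h d hd)
        · intro h d hd; exact (ih d false).2 (by simpa using h d hd)
      · simp only [ev, Formula.eval, if_pos rfl]
        rw [TV.lo_sSup, exists_val_iff]
        constructor
        · rintro ⟨d, hd, h⟩; exact ⟨d, hd, by simpa using (ih d true).1 h⟩
        · rintro ⟨d, hd, h⟩; exact ⟨d, hd, (ih d true).2 (by simpa using h)⟩

lemma lo_eval_mono {I I' : Struct σ D} (φ : Formula σ D)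
    (hP : ∀ a, TV.Lo (I a) → TV.Lo (I' a)) (hN : ∀ a, TV.Fa (I a) → TV.Fa (I' a))
    (h : TV.Lo (φ.eval I)) : TV.Lo (φ.eval I') := by
  have h1 := (ev_eval I φ true).2 (by simpa using h)
  have h2 := ev_mono hP hN φ true h1
  simpa using (ev_eval I' φ true).1 h2

lemma fa_eval_mono {I I' : Struct σ D} (φ : Formula σ D)
    (hP : ∀ a, TV.Lo (I a) → TV.Lo (I' a)) (hN : ∀ a, TV.Fa (I a) → TV.Fa (I' a))
    (h : TV.Fa (φ.eval I)) : TV.Fa (φ.eval I') := by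
  have h1 := (ev_eval I φ false).2 (by simpa using h)
  have h2 := ev_mono hP hN φ false h1
  simpa using (ev_eval I' φ false).1 h2

end Aux

open Classical in
lemma combine_def {σ : Voc} {D : Type} (Δ : Defn σ D) (Io : Struct σ D)
    (x y : Set (Atom σ D)) {a : Atom σ D} (hd : definedAtom Δ a) :
    combine Δ Io x y a =
      if a ∈ x then (if a ∈ y then TV.t else TV.i) else (if a ∈ y then TV.u else TV.f) := by
  unfold combine; rw [if_pos hd]

lemma combine_open {σ : Voc} {D : Type} (Δ : Defn σ D) (Io : Struct σ D)
    (x y : Set (Atom σ D)) {a : Atom σ D} (hd : ¬ definedAtom Δ a) :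
    combine Δ Io x y a = Io a := by
  unfold combine; rw [if_neg hd]

lemma lo_combine_def {σ : Voc} {D : Type} {Δ : Defn σ D} {Io : Struct σ D}
    {x y : Set (Atom σ D)} {a : Atom σ D} (hd : definedAtom Δ a) :
    TV.Lo (combine Δ Io x y a) ↔ a ∈ x := by
  rw [combine_def Δ Io x y hd]
  by_cases hx : a ∈ x <;> by_cases hy : a ∈ y <;> simp [hx, hy, TV.Lo]

lemma fa_combine_def {σ : Voc} {D : Type} {Δ : Defn σ D} {Io : Struct σ D}
    {x y : Set (Atom σ D)} {a : Atom σ D} (hd : definedAtom Δ a) :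
    TV.Fa (combine Δ Io x y a) ↔ a ∉ y := by
  rw [combine_def Δ Io x y hd]
  by_cases hx : a ∈ x <;> by_cases hy : a ∈ y <;> simp [hx, hy, TV.Fa]

lemma lo_toStruct {σ : Voc} {D : Type} {S : Set (Lit σ D)} {a : Atom σ D} :
    TV.Lo (toStruct S a) ↔ Lit.pos a ∈ S := by
  unfold toStruct; split_ifs with h1 h2 h3 <;> simp [TV.Lo, h1, *]

lemma fa_toStruct {σ : Voc} {D : Type} {S : Set (Lit σ D)} {a : Atom σ D} :
    TV.Fa (toStruct S a) ↔ Lit.neg a ∈ S := by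
  unfold toStruct; split_ifs with h1 h2 h3 <;> simp [TV.Fa, h1, *]

lemma lo_bodyVal {σ : Voc} {D : Type} {Δ : Defn σ D} {I : Struct σ D} {a : Atom σ D}
    {r : Rule σ D} {d} (hr : r ∈ Δ) (hd : d ∈ r.dom) (ha : a = ⟨r.head, d⟩)
    (hLo : TV.Lo ((r.body d).eval I)) : TV.Lo (bodyVal Δ I a) := by
  unfold bodyVal; rw [TV.lo_sSup]
  exact ⟨_, ⟨r, hr, d, hd, ha, rfl⟩, hLo⟩

lemma fa_bodyVal {σ : Voc} {D : Type} {Δ : Defn σ D} (hwf : WellFormed Δ)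
    {I : Struct σ D} {a : Atom σ D} {r : Rule σ D} {d} (hr : r ∈ Δ) (hd : d ∈ r.dom)
    (ha : a = ⟨r.head, d⟩) (hFa : TV.Fa ((r.body d).eval I)) : TV.Fa (bodyVal Δ I a) := by
  unfold bodyVal; rw [TV.fa_sSup]
  rintro v ⟨r', hr', d', hd', ha', rfl⟩
  have hrr : r' = r := hwf a r' r hr' hr ⟨d', hd', ha'⟩ ⟨d, hd, ha⟩
  subst hrr
  have hdd : d' = d := by
    have h := ha'.symm.trans ha
    simp only [Atom.mk.injEq, heq_eq_eq, true_and] at h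
    exact h
  subst hdd
  exact hFa

section Ops

variable {σ : Voc} {D : Type} (Δ : Defn σ D) (Io : Struct σ D)

lemma lo_combine_mono {x x' y y' : Set (Atom σ D)} (hx : x ⊆ x') (a : Atom σ D) :
    TV.Lo (combine Δ Io x y a) → TV.Lo (combine Δ Io x' y' a) := by
  by_cases hd : definedAtom Δ a
  · rw [lo_combine_def hd, lo_combine_def hd]; exact fun h => hx h
  · rw [combine_open Δ Io x y hd, combine_open Δ Io x' y' hd]; exact id

lemma fa_combine_mono {x x' y y' : Set (Atom σ D)} (hy : y' ⊆ y) (a : Atom σ D) :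
    TV.Fa (combine Δ Io x y a) → TV.Fa (combine Δ Io x' y' a) := by
  by_cases hd : definedAtom Δ a
  · rw [fa_combine_def hd, fa_combine_def hd]; exact fun h hc => h (hy hc)
  · rw [combine_open Δ Io x y hd, combine_open Δ Io x' y' hd]; exact id

lemma lo_bodyVal_mono {x x' y y' : Set (Atom σ D)} (hx : x ⊆ x') (hy : y' ⊆ y)
    {a : Atom σ D} (h : TV.Lo (bodyVal Δ (combine Δ Io x y) a)) :
    TV.Lo (bodyVal Δ (combine Δ Io x' y') a) := by
  unfold bodyVal at h; rw [TV.lo_sSup] at h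
  obtain ⟨v, ⟨r, hr, d, hd, ha, rfl⟩, hLo⟩ := h
  exact lo_bodyVal hr hd ha
    (lo_eval_mono _ (lo_combine_mono Δ Io hx) (fa_combine_mono Δ Io hy) hLo)

lemma fa_bodyVal_mono {x x' y y' : Set (Atom σ D)} (hx : x ⊆ x') (hy : y' ⊆ y)
    {a : Atom σ D} (h : TV.Fa (bodyVal Δ (combine Δ Io x y) a)) :
    TV.Fa (bodyVal Δ (combine Δ Io x' y') a) := by
  unfold bodyVal at h ⊢; rw [TV.fa_sSup] at h ⊢
  rintro v ⟨r, hr, d, hd, ha, rfl⟩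
  have := h _ ⟨r, hr, d, hd, ha, rfl⟩
  exact fa_eval_mono _ (lo_combine_mono Δ Io hx) (fa_combine_mono Δ Io hy) this

lemma lowerOp_mono {x x' y y' : Set (Atom σ D)} (hx : x ⊆ x') (hy : y' ⊆ y) :
    lowerOp Δ Io x y ⊆ lowerOp Δ Io x' y' := by
  rintro a ⟨hd, hl⟩
  exact ⟨hd, lo_bodyVal_mono Δ Io hx hy (a := a) hl⟩

lemma upperOp_mono {x x' y y' : Set (Atom σ D)} (hx : x' ⊆ x) (hy : y ⊆ y') :
    upperOp Δ Io x y ⊆ upperOp Δ Io x' y' := by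
  rintro a ⟨hd, hl⟩
  refine ⟨hd, ?_⟩
  rw [TV.tu_iff] at hl ⊢
  exact fun h => hl (fa_bodyVal_mono Δ Io hx hy (a := a) h)

lemma stableLower_subset {x y : Set (Atom σ D)} (hx : lowerOp Δ Io x y ⊆ x) :
    stableLower Δ Io y ⊆ x :=
  Set.sInter_subset_of_mem hx

lemma stableUpper_subset {x y : Set (Atom σ D)} (hy : upperOp Δ Io x y ⊆ y) :
    stableUpper Δ Io x ⊆ y :=
  Set.sInter_subset_of_mem hy

lemma lowerOp_stable {y : Set (Atom σ D)} :
    lowerOp Δ Io (stableLower Δ Io y) y ⊆ stableLower Δ Io y := by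
  intro a ha
  rw [stableLower, Set.mem_sInter]
  intro x hx
  exact hx (lowerOp_mono Δ Io (stableLower_subset Δ Io hx) (le_refl y) ha)

lemma upperOp_stable {x : Set (Atom σ D)} :
    upperOp Δ Io x (stableUpper Δ Io x) ⊆ stableUpper Δ Io x := by
  intro a ha
  rw [stableUpper, Set.mem_sInter]
  intro y hy
  exact hy (upperOp_mono Δ Io (le_refl x) (stableUpper_subset Δ Io hy) ha)

lemma stableUpper_defined {x : Set (Atom σ D)} :
    stableUpper Δ Io x ⊆ {a | definedAtom Δ a} :=
  stableUpper_subset Δ Io (fun _ ha => ha.1)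

lemma stableLower_anti {y y' : Set (Atom σ D)} (h : y ⊆ y') :
    stableLower Δ Io y' ⊆ stableLower Δ Io y := by
  intro a ha
  rw [stableLower, Set.mem_sInter]
  intro x hx
  have hx' : lowerOp Δ Io x y' ⊆ x := fun b hb =>
    hx (lowerOp_mono Δ Io (le_refl x) h hb)
  exact (Set.mem_sInter.1 ha) x hx'

lemma stableUpper_anti {x x' : Set (Atom σ D)} (h : x ⊆ x') :
    stableUpper Δ Io x' ⊆ stableUpper Δ Io x := by
  intro a ha
  rw [stableUpper, Set.mem_sInter]
  intro y hy
  have hy' : upperOp Δ Io x' y ⊆ y := fun b hb =>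
    hy (upperOp_mono Δ Io h (le_refl y) hb)
  exact (Set.mem_sInter.1 ha) y hy'

lemma snd_subset_wfUpper {p : Set (Atom σ D) × Set (Atom σ D)}
    (hp : p ∈ wfPrefixpoints Δ Io) : p.2 ⊆ wfUpper Δ Io :=
  Set.subset_sUnion_of_mem (Set.mem_image_of_mem Prod.snd hp)

lemma wfLower_subset_fst {p : Set (Atom σ D) × Set (Atom σ D)}
    (hp : p ∈ wfPrefixpoints Δ Io) : wfLower Δ Io ⊆ p.1 :=
  Set.sInter_subset_of_mem (Set.mem_image_of_mem Prod.fst hp)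

lemma stableLower_wfUpper_subset : stableLower Δ Io (wfUpper Δ Io) ⊆ wfLower Δ Io := by
  intro a ha
  rw [wfLower, Set.mem_sInter]
  rintro s ⟨p, hp, rfl⟩
  exact hp.1 (stableLower_anti Δ Io (snd_subset_wfUpper Δ Io hp) ha)

lemma wfUpper_subset_stableUpper : wfUpper Δ Io ⊆ stableUpper Δ Io (wfLower Δ Io) := by
  intro a ha
  rw [wfUpper, Set.mem_sUnion] at ha
  obtain ⟨s, ⟨p, hp, rfl⟩, has⟩ := ha
  exact stableUpper_anti Δ Io (wfLower_subset_fst Δ Io hp) (hp.2 has)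

end Ops

section Congr

variable {σ : Voc} {D : Type} {Δ : Defn σ D} {Io Io' : Struct σ D}

lemma combine_congr (h : ∀ a, ¬ definedAtom Δ a → Io a = Io' a) :
    ∀ x y, combine Δ Io x y = combine Δ Io' x y := by
  intro x y; funext a
  by_cases hd : definedAtom Δ a
  · rw [combine_def Δ Io x y hd, combine_def Δ Io' x y hd]
  · rw [combine_open Δ Io x y hd, combine_open Δ Io' x y hd]; exact h a hd

lemma wfModel_congr (h : ∀ a, ¬ definedAtom Δ a → Io a = Io' a) :
    wfModel Δ Io = wfModel Δ Io' := by
  have hc := combine_congr h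
  have hlow : ∀ x y, lowerOp Δ Io x y = lowerOp Δ Io' x y := by
    intro x y; unfold lowerOp; rw [hc]
  have hup : ∀ x y, upperOp Δ Io x y = upperOp Δ Io' x y := by
    intro x y; unfold upperOp; rw [hc]
  have hsl : ∀ y, stableLower Δ Io y = stableLower Δ Io' y := by
    intro y; unfold stableLower; simp only [hlow]
  have hsu : ∀ x, stableUpper Δ Io x = stableUpper Δ Io' x := by
    intro x; unfold stableUpper; simp only [hup]
  have hpre : wfPrefixpoints Δ Io = wfPrefixpoints Δ Io' := by
    unfold wfPrefixpoints; simp only [hsl, hsu]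
  unfold wfModel wfLower wfUpper
  rw [hpre, hc]

lemma wfModel_open {a : Atom σ D} (hd : ¬ definedAtom Δ a) : wfModel Δ Io a = Io a :=
  combine_open Δ Io _ _ hd

end Congr

section InfPath

variable {σ : Voc} {D : Type} (J : Lit σ D → Set (Lit σ D))

open Classical in
lemma exists_inf_path {x : Lit σ D} (h : ¬ Acc (fun y x => y ∈ J x) x) :
    ∃ p : ℕ → Lit σ D, p 0 = x ∧ ∀ n, p (n + 1) ∈ J (p n) := by
  classical
  have step : ∀ z : {z : Lit σ D // ¬ Acc (fun y x => y ∈ J x) z},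
      ∃ y : {z : Lit σ D // ¬ Acc (fun y x => y ∈ J x) z}, (y : Lit σ D) ∈ J z := by
    rintro ⟨z, hz⟩
    by_contra hcon
    push_neg at hcon
    apply hz
    constructor
    intro y hy
    by_contra hy'
    exact hcon ⟨y, hy'⟩ hy
  choose f hf using step
  refine ⟨fun n => (f^[n] ⟨x, h⟩ : {z : Lit σ D // ¬ Acc (fun y x => y ∈ J x) z}), rfl, ?_⟩
  intro n
  show ((f^[n + 1] ⟨x, h⟩ : { z : Lit σ D // ¬ Acc (fun y x => y ∈ J x) z }) : Lit σ D) ∈ _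
  rw [Function.iterate_succ_apply']
  exact hf _

end InfPath

/-- Proposition 4: in an acceptable state `⟨Δg, Δd, J, I⟩`,
the definition `Δg ∪ Δd` has a well-founded model that expands the literals
that are true in `I` and defined in `Δd`. -/
theorem acceptable_state_has_wf_model (σ : Voc) (D : Type) [Nonempty D]
    (Pt : σ.Pred) (hPt : σ.arity Pt = 0)
    (Δ : Defn σ D) (hΔ : WellFormed Δ) (htotΔ : IsTotalDef Δ)
    (hdef : definedAtom Δ (ptAtom σ D Pt hPt))
    (Iin : Set (Lit σ D)) (Δg Δd : Defn σ D)
    (J : Lit σ D → Set (Lit σ D)) (I : Set (Lit σ D))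
    (hacc : AcceptableState Δ Iin Δg Δd J I) :
    ∃ M : Struct σ D, IsModelOfDef M (Δg ∪ Δd) ∧
      ∀ l ∈ I, definedLit Δd l → litTrue M l := by
  classical
  set Δ' : Defn σ D := Δg ∪ Δd with hD'
  set L : Set (Lit σ D) := { l | l ∈ I ∧ definedLit Δd l } with hLdef
  set R : Set (Lit σ D) := reachSet J L with hRdef
  obtain ⟨hTot, hWfd, hRcons⟩ := hacc.justified
  have hwf' : WellFormed Δ' := hacc.wf_gd
  have child_mem : ∀ {x y : Lit σ D}, x ∈ R → y ∈ J x → y ∈ R := by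
    rintro x y ⟨l, hl, hreach⟩ hy
    exact ⟨l, hl, Relation.ReflTransGen.tail hreach hy⟩
  have hDd' : ∀ {l : Lit σ D}, definedLit Δd l → definedLit Δ' l := by
    rintro l ⟨r, hr, hdefs⟩
    exact ⟨r, Set.mem_union_right Δg hr, hdefs⟩
  have djust : ∀ x ∈ R, definedLit Δ' x → IsDirectJust Δ' x (J x) := by
    intro x hx hdl
    rcases hacc.just x with h | h
    · exact absurd h (hTot x hx hdl)
    · exact h
  set Io : Struct σ D := fun a => if Lit.pos a ∈ R then TV.t else TV.f with hIodef
  have hIo2 : TwoValued Io := by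
    intro a
    rw [hIodef]; dsimp only
    split_ifs
    · exact Or.inl rfl
    · exact Or.inr rfl
  have lo_Io : ∀ a, TV.Lo (Io a) ↔ Lit.pos a ∈ R := by
    intro a; rw [hIodef]; dsimp only
    split_ifs with h <;> simp [h, TV.Lo]
  have fa_Io : ∀ a, TV.Fa (Io a) ↔ Lit.pos a ∉ R := by
    intro a; rw [hIodef]; dsimp only
    split_ifs with h <;> simp [h, TV.Fa]
  set wfL : Set (Atom σ D) := wfLower Δ' Io with hwfLdef
  set wfU : Set (Atom σ D) := wfUpper Δ' Io with hwfUdef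
  set sL : Set (Atom σ D) := stableLower Δ' Io wfU with hsLdef
  set sU : Set (Atom σ D) := stableUpper Δ' Io wfL with hsUdef
  have hsLsub : sL ⊆ wfL := stableLower_wfUpper_subset Δ' Io
  have hwfUsub : wfU ⊆ sU := wfUpper_subset_stableUpper Δ' Io
  have pos_acc : ∀ a : Atom σ D, Lit.pos a ∈ R → Acc (fun y x => y ∈ J x) (Lit.pos a) := by
    intro a haR
    by_contra hna
    obtain ⟨p, hp0, hpstep⟩ := exists_inf_path J hna
    obtain ⟨l, hlL, hreach⟩ := haR
    have hneg := hWfd l hlL p ⟨by rw [hp0]; exact hreach, hpstep⟩ 0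
    rw [hp0] at hneg
    exact hneg
  have keyT : ∀ a : Atom σ D, Lit.pos a ∈ R → definedAtom Δ' a →
      ∀ (X Y : Set (Atom σ D)),
      (∀ c, Lit.pos c ∈ J (Lit.pos a) → definedAtom Δ' c → c ∈ X) →
      (∀ c, Lit.neg c ∈ J (Lit.pos a) → definedAtom Δ' c → c ∉ Y) →
      TV.Lo (bodyVal Δ' (combine Δ' Io X Y) a) := by
    intro a haR hda X Y hX hY
    obtain ⟨hcons, hne, r, hr, d, hdm, hat, hev⟩ := djust _ haR hda
    refine lo_bodyVal hr hdm hat ?_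
    refine lo_eval_mono _ ?_ ?_ (show TV.Lo _ by rw [hev]; exact Or.inl rfl)
    · intro c hc
      rw [lo_toStruct] at hc
      have hcR := child_mem haR hc
      by_cases hd : definedAtom Δ' c
      · rw [lo_combine_def hd]; exact hX c hc hd
      · rw [combine_open Δ' Io X Y hd]; exact (lo_Io c).2 hcR
    · intro c hc
      rw [fa_toStruct] at hc
      have hcR := child_mem haR hc
      by_cases hd : definedAtom Δ' c
      · rw [fa_combine_def hd]; exact hY c hc hd
      · rw [combine_open Δ' Io X Y hd]
        exact (fa_Io c).2 (fun hpos => hRcons c ⟨hpos, hcR⟩)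
  have keyF : ∀ a : Atom σ D, Lit.neg a ∈ R → definedAtom Δ' a →
      ∀ (X Y : Set (Atom σ D)),
      (∀ c, Lit.pos c ∈ J (Lit.neg a) → definedAtom Δ' c → c ∈ X) →
      (∀ c, Lit.neg c ∈ J (Lit.neg a) → definedAtom Δ' c → c ∉ Y) →
      TV.Fa (bodyVal Δ' (combine Δ' Io X Y) a) := by
    intro a haR hda X Y hX hY
    obtain ⟨hcons, hne, r, hr, d, hdm, hat, hev⟩ := djust _ haR hda
    refine fa_bodyVal hwf' hr hdm hat ?_
    refine fa_eval_mono _ ?_ ?_ (show TV.Fa _ by rw [hev]; exact Or.inl rfl)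
    · intro c hc
      rw [lo_toStruct] at hc
      have hcR := child_mem haR hc
      by_cases hd : definedAtom Δ' c
      · rw [lo_combine_def hd]; exact hX c hc hd
      · rw [combine_open Δ' Io X Y hd]; exact (lo_Io c).2 hcR
    · intro c hc
      rw [fa_toStruct] at hc
      have hcR := child_mem haR hc
      by_cases hd : definedAtom Δ' c
      · rw [fa_combine_def hd]; exact hY c hc hd
      · rw [combine_open Δ' Io X Y hd]
        exact (fa_Io c).2 (fun hpos => hRcons c ⟨hpos, hcR⟩)
  have tier1 : ∀ x : Lit σ D, Acc (fun y x => y ∈ J x) x → x ∈ R →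
      (∀ a, x = Lit.pos a → definedAtom Δ' a → a ∈ sL) ∧
      (∀ a, x = Lit.neg a → a ∉ sU) := by
    intro x hx
    induction hx with
    | intro x hx' ih =>
      intro hxR
      constructor
      · rintro a rfl hda
        rw [hsLdef, stableLower, Set.mem_sInter]
        intro x' hx''
        apply hx''
        refine ⟨hda, ?_⟩
        refine keyT a hxR hda x' wfU ?_ ?_
        · intro c hc hd
          have h1 := (ih _ hc (child_mem hxR hc)).1 c rfl hd
          exact stableLower_subset Δ' Io hx'' h1
        · intro c hc _
          have h2 := (ih _ hc (child_mem hxR hc)).2 c rfl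
          exact fun hcY => h2 (hwfUsub hcY)
      · rintro a rfl
        by_cases hda : definedAtom Δ' a
        · intro haU
          have hFa : TV.Fa (bodyVal Δ' (combine Δ' Io wfL (sU \ {a})) a) := by
            refine keyF a hxR hda wfL (sU \ {a}) ?_ ?_
            · intro c hc hd
              exact hsLsub ((ih _ hc (child_mem hxR hc)).1 c rfl hd)
            · intro c hc _
              have h2 := (ih _ hc (child_mem hxR hc)).2 c rfl
              exact fun hcY => h2 hcY.1
          have hpre : upperOp Δ' Io wfL (sU \ {a}) ⊆ sU \ {a} := by
            intro b hb
            refine ⟨upperOp_stable Δ' Io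
              (upperOp_mono Δ' Io (le_refl wfL) Set.diff_subset hb), ?_⟩
            intro hba
            have hba' : b = a := hba
            subst hba'
            exact (TV.tu_iff.1 hb.2) hFa
          have hmem := stableUpper_subset Δ' Io hpre haU
          exact hmem.2 rfl
        · intro haU
          exact hda (stableUpper_defined Δ' Io haU)
  have tier2 : ∀ a : Atom σ D, Lit.neg a ∈ R → a ∉ sU := by
    intro a haR
    by_cases hda : definedAtom Δ' a
    · have hpre : upperOp Δ' Io wfL (sU \ {b | Lit.neg b ∈ R}) ⊆
          sU \ {b | Lit.neg b ∈ R} := by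
        intro b hb
        refine ⟨upperOp_stable Δ' Io
          (upperOp_mono Δ' Io (le_refl wfL) Set.diff_subset hb), ?_⟩
        intro hbR
        have hdb : definedAtom Δ' b := hb.1
        have hFa : TV.Fa (bodyVal Δ' (combine Δ' Io wfL (sU \ {b | Lit.neg b ∈ R})) b) := by
          refine keyF b hbR hdb _ _ ?_ ?_
          · intro c hc hd
            have hcR : Lit.pos c ∈ R := child_mem hbR hc
            exact hsLsub ((tier1 _ (pos_acc c hcR) hcR).1 c rfl hd)
          · intro c hc _
            exact fun hcY => hcY.2 (child_mem hbR hc)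
        exact (TV.tu_iff.1 hb.2) hFa
      intro haU
      exact (stableUpper_subset Δ' Io hpre haU).2 haR
    · exact fun haU => hda (stableUpper_defined Δ' Io haU)
  have hM2 : TwoValued (wfModel Δ' Io) := hacc.total_gd Io hIo2
  have hMcomb : wfModel Δ' Io = combine Δ' Io wfL wfU := rfl
  refine ⟨wfModel Δ' Io, ⟨hM2, ?_⟩, ?_⟩
  · intro a
    have hopen : ∀ b, ¬ definedAtom Δ' b → Io b = wfModel Δ' Io b :=
      fun b hb => (wfModel_open hb).symm
    exact congrFun (wfModel_congr hopen) a
  · intro l hlI hld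
    have hlL : l ∈ L := ⟨hlI, hld⟩
    have hlR : l ∈ R := ⟨l, hlL, Relation.ReflTransGen.refl⟩
    have hdl' : definedLit Δ' l := hDd' hld
    cases l with
    | pos a =>
      have hda : definedAtom Δ' a := hdl'
      have hwl : a ∈ wfL := hsLsub ((tier1 _ (pos_acc a hlR) hlR).1 a rfl hda)
      show wfModel Δ' Io a = TV.t
      rw [hMcomb, combine_def Δ' Io _ _ hda, if_pos hwl]
      by_cases hu : a ∈ wfU
      · rw [if_pos hu]
      · exfalso
        have h2 := hM2 a
        rw [hMcomb, combine_def Δ' Io _ _ hda, if_pos hwl, if_neg hu] at h2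
        rcases h2 with h | h <;> exact absurd h (by decide)
    | neg a =>
      have hda : definedAtom Δ' a := hdl'
      have hnu : a ∉ wfU := fun h => tier2 a hlR (hwfUsub h)
      show wfModel Δ' Io a = TV.f
      rw [hMcomb, combine_def Δ' Io _ _ hda]
      by_cases hl : a ∈ wfL
      · exfalso
        have h2 := hM2 a
        rw [hMcomb, combine_def Δ' Io _ _ hda, if_pos hl, if_neg hnu] at h2
        rcases h2 with h | h <;> exact absurd h (by decide)
      · rw [if_neg hl, if_neg hnu]

end LazyMX
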